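/- If a digraph D has a limit edge from an end ω to an end η, then ω ≤ η in the natural partial order on ends: for every pair of rays R_ω, R_η representing ω and η respectively there are infinitely many pairwise disjoint directed paths from R_ω to R_η. -/

import Mathlib

variable {V : Type*}

/-- Reachability from `a` to `b` by a directed walk staying inside the vertex set `S`. -/
def ReachIn (D : V → V → Prop) (S : Set V) (a b : V) : Prop :=
  a ∈ S ∧ b ∈ S ∧ Relation.ReflTransGen (fun x y => y ∈ S ∧ D x y) a b

/-- `C` is a strong component of the subdigraph of `D` induced on `S`. -/
def IsSCCIn (D : V → V → Prop) (S : Set V) (C : Set V) : Prop :=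
  ∃ a ∈ S, C = {b | ReachIn D S a b ∧ ReachIn D S b a}

/-- A directed ray in `D`. -/
def IsRay (D : V → V → Prop) (R : ℕ → V) : Prop :=
  Function.Injective R ∧ ∀ n, D (R n) (R (n + 1))

/-- A reverse directed ray in `D`. -/
def IsRevRay (D : V → V → Prop) (R : ℕ → V) : Prop :=
  Function.Injective R ∧ ∀ n, D (R (n + 1)) (R n)

/-- The ray `R` has a tail inside the vertex set `C`. -/
def HasTailIn (R : ℕ → V) (C : Set V) : Prop :=
  ∃ n, ∀ m, n ≤ m → R m ∈ C

/-- A solid ray: for every finite `X` it has a tail in some strong component of `D − X`. -/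
def Solid (D : V → V → Prop) (R : ℕ → V) : Prop :=
  IsRay D R ∧ ∀ X : Finset V, ∃ C, IsSCCIn D ((↑X : Set V)ᶜ) C ∧ HasTailIn R C

/-- Two solid rays are end-equivalent: for every finite `X` they have tails in the same
strong component of `D − X`. -/
def EndEquiv (D : V → V → Prop) (R R' : ℕ → V) : Prop :=
  ∀ X : Finset V, ∃ C, IsSCCIn D ((↑X : Set V)ᶜ) C ∧ HasTailIn R C ∧ HasTailIn R' C

/-- `Ω` is an end of `D`: the class of solid rays equivalent to some solid ray. -/
def IsEnd (D : V → V → Prop) (Ω : Set (ℕ → V)) : Prop :=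
  ∃ R, Solid D R ∧ Ω = {R' | Solid D R' ∧ EndEquiv D R R'}

/-- A (nonempty) directed path, recorded as its list of vertices. -/
def IsPathList (D : V → V → Prop) (l : List V) : Prop :=
  l ≠ [] ∧ l.Nodup ∧ l.Chain' D

/-- Infinitely many pairwise disjoint `A`–`B` paths in `D` (each meeting `A` precisely in its
first vertex and `B` precisely in its last vertex). -/
def DisjointPathsFrom (D : V → V → Prop) (A B : Set V) : Prop :=
  ∃ P : ℕ → List V,
    (∀ k, IsPathList D (P k)) ∧
    (∀ j k, j ≠ k → ∀ x ∈ P j, x ∉ P k) ∧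
    (∀ k, ∃ a, (P k).head? = some a ∧ a ∈ A) ∧
    (∀ k, ∃ b, (P k).getLast? = some b ∧ b ∈ B) ∧
    (∀ k, ∀ x ∈ (P k).tail, x ∉ A) ∧
    (∀ k, ∀ x ∈ (P k).dropLast, x ∉ B)

/-- A necklace in `D`: an inflated symmetric ray with finite branch sets (beads), given by its
beads together with the connecting (subdividing) paths in both directions. -/
structure Necklace (D : V → V → Prop) where
  bead : ℕ → Set V
  fwd : ℕ → List V
  bwd : ℕ → List V
  bead_fin : ∀ n, (bead n).Finite
  bead_nonempty : ∀ n, (bead n).Nonempty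
  bead_disj : ∀ m n, m ≠ n → Disjoint (bead m) (bead n)
  bead_strong : ∀ n, ∀ a ∈ bead n, ∀ b ∈ bead n, ReachIn D (bead n) a b
  fwd_path : ∀ n, IsPathList D (fwd n)
  bwd_path : ∀ n, IsPathList D (bwd n)
  fwd_head : ∀ n a, (fwd n).head? = some a → a ∈ bead n
  fwd_last : ∀ n b, (fwd n).getLast? = some b → b ∈ bead (n + 1)
  bwd_head : ∀ n a, (bwd n).head? = some a → a ∈ bead (n + 1)
  bwd_last : ∀ n b, (bwd n).getLast? = some b → b ∈ bead n
  fwd_inner : ∀ n, ∀ x ∈ (fwd n).tail.dropLast, ∀ m, x ∉ bead m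
  bwd_inner : ∀ n, ∀ x ∈ (bwd n).tail.dropLast, ∀ m, x ∉ bead m
  fwd_fwd_disj : ∀ m n, m ≠ n → ∀ x ∈ (fwd m).tail.dropLast, x ∉ (fwd n).tail.dropLast
  bwd_bwd_disj : ∀ m n, m ≠ n → ∀ x ∈ (bwd m).tail.dropLast, x ∉ (bwd n).tail.dropLast
  fwd_bwd_disj : ∀ m n, ∀ x ∈ (fwd m).tail.dropLast, x ∉ (bwd n).tail.dropLast

/-- The vertex set of a necklace. -/
def Necklace.verts {D : V → V → Prop} (N : Necklace D) : Set V :=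
  (⋃ n, N.bead n) ∪ {x | ∃ n, x ∈ N.fwd n ∨ x ∈ N.bwd n}

/-- A necklace is attached to `𝒰` if infinitely many of its beads meet every set in `𝒰`. -/
def Necklace.AttachedTo {D : V → V → Prop} (N : Necklace D) (𝒰 : Finset (Set V)) : Prop :=
  {n | ∀ U ∈ 𝒰, (N.bead n ∩ U).Nonempty}.Infinite

/-- A necklace represents the end of the solid ray `R`: for every finite `X`, all but finitely
many beads lie in the strong component of `D − X` in which `R` has a tail. -/
def NecklaceRepresents {D : V → V → Prop} (N : Necklace D) (R : ℕ → V) : Prop :=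
  ∀ X : Finset V, ∃ C, IsSCCIn D ((↑X : Set V)ᶜ) C ∧ HasTailIn R C ∧
    ∃ n₀, ∀ n, n₀ ≤ n → N.bead n ⊆ C

/-- `URankLE D 𝒰 S α`: the subdigraph of `D` induced on `S` has `𝒰`-rank at most `α`. -/
inductive URankLE (D : V → V → Prop) (𝒰 : Finset (Set V)) : Set V → Ordinal → Prop
  | base (S : Set V) (α : Ordinal) (U : Set V) (hU : U ∈ 𝒰) (h : (U ∩ S).Finite) :
      URankLE D 𝒰 S α
  | step (S : Set V) (α : Ordinal) (X : Finset V) (r : Set V → Ordinal)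
      (hr : ∀ C, IsSCCIn D (S \ ↑X) C → r C < α)
      (h : ∀ C, IsSCCIn D (S \ ↑X) C → URankLE D 𝒰 C (r C)) :
      URankLE D 𝒰 S α

/-- `D` (induced on `S`) has `𝒰`-rank exactly `α`. -/
def HasURank (D : V → V → Prop) (𝒰 : Finset (Set V)) (S : Set V) (α : Ordinal) : Prop :=
  URankLE D 𝒰 S α ∧ ∀ β < α, ¬ URankLE D 𝒰 S β

/-- A vertex-direction of `D`. -/
def IsVertexDirection (D : V → V → Prop) (f : Finset V → Set V) : Prop :=
  (∀ X : Finset V, IsSCCIn D ((↑X : Set V)ᶜ) (f X)) ∧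
  ∀ X Y : Finset V, X ⊆ Y → f Y ⊆ f X

/-- A separation `(A,B)` of `D`: `A ∪ B = V(D)` and no edge from `B∖A` to `A∖B`. -/
def IsSep (D : V → V → Prop) (A B : Set V) : Prop :=
  A ∪ B = Set.univ ∧ ∀ a ∈ B \ A, ∀ b ∈ A \ B, ¬ D a b

/-- A finite order separation `(A,B)` points towards the vertex-direction `f`. -/
def PointsTowards (D : V → V → Prop) (f : Finset V → Set V) (A B : Set V)
    (h : (A ∩ B).Finite) : Prop :=
  f h.toFinset ⊆ B \ A

/-- A finite order separation `(A,B)` points away from the vertex-direction `f`. -/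
def PointsAway (D : V → V → Prop) (f : Finset V → Set V) (A B : Set V)
    (h : (A ∩ B).Finite) : Prop :=
  f h.toFinset ⊆ A \ B

/-- The vertex `v` dominates the vertex-direction `f`. -/
def DomDir (D : V → V → Prop) (v : V) (f : Finset V → Set V) : Prop :=
  ∀ A B, IsSep D A B → ∀ h : (A ∩ B).Finite, PointsAway D f A B h → v ∈ A

/-- An infinite `v`–`B` fan: infinitely many `v`–`B` paths meeting pairwise precisely in `v`. -/
def Fan (D : V → V → Prop) (v : V) (B : Set V) : Prop :=
  ∃ P : ℕ → List V,
    (∀ k, IsPathList D (P k)) ∧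
    (∀ k, (P k).head? = some v) ∧
    (∀ k, 2 ≤ (P k).length) ∧
    (∀ k, ∃ b, (P k).getLast? = some b ∧ b ∈ B) ∧
    (∀ k, ∀ x ∈ (P k).dropLast, x ∉ B) ∧
    (∀ j k, j ≠ k → ∀ x ∈ (P j).tail, x ∉ (P k).tail)

/-- Limit edge between the ends of the solid rays `R` and `R'`. -/
def LimitEdgeEE (D : V → V → Prop) (R R' : ℕ → V) : Prop :=
  ∀ (X : Finset V) C C', IsSCCIn D ((↑X : Set V)ᶜ) C → HasTailIn R C →
    IsSCCIn D ((↑X : Set V)ᶜ) C' → HasTailIn R' C' → C ≠ C' →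
    ∃ a ∈ C, ∃ b ∈ C', D a b

/-- Limit edge from the vertex `v` to the end of the solid ray `R`. -/
def LimitEdgeVE (D : V → V → Prop) (v : V) (R : ℕ → V) : Prop :=
  ∀ (X : Finset V) C, IsSCCIn D ((↑X : Set V)ᶜ) C → HasTailIn R C → v ∉ C →
    ∃ b ∈ C, D v b

/-- Limit edge from the end of the solid ray `R` to the vertex `v`. -/
def LimitEdgeEV (D : V → V → Prop) (R : ℕ → V) (v : V) : Prop :=
  ∀ (X : Finset V) C, IsSCCIn D ((↑X : Set V)ᶜ) C → HasTailIn R C → v ∉ C →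
    ∃ a ∈ C, D a v

/-- A subdivided infinite out-star in `D` with centre `c`, given by its paths. -/
def IsStar (D : V → V → Prop) (c : V) (P : ℕ → List V) : Prop :=
  (∀ k, IsPathList D (P k)) ∧ (∀ k, (P k).head? = some c) ∧
  (∀ k, 2 ≤ (P k).length) ∧
  (∀ j k, j ≠ k → ∀ x ∈ (P j).tail, x ∉ (P k).tail)

/-- A directed comb in `D` with spine `R`, given by its (pairwise disjoint) paths each meeting
`R` precisely in its first vertex. -/
def IsComb (D : V → V → Prop) (R : ℕ → V) (P : ℕ → List V) : Prop :=
  IsRay D R ∧ (∀ k, IsPathList D (P k)) ∧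
  (∀ k, ∃ n, (P k).head? = some (R n)) ∧
  (∀ k, ∀ x ∈ (P k).tail, ∀ n, x ≠ R n) ∧
  (∀ j k, j ≠ k → ∀ x ∈ P j, x ∉ P k)

/-- A star in `D` whose `k`-th leaf is `a k`. -/
def StarAttachedWith (D : V → V → Prop) (a : ℕ → V) : Prop :=
  ∃ c P, IsStar D c P ∧ ∀ k, (P k).getLast? = some (a k)

/-- A comb in `D` whose `k`-th tooth is `a k`. -/
def CombAttachedWith (D : V → V → Prop) (a : ℕ → V) : Prop :=
  ∃ R P, IsComb D R P ∧ ∀ k, (P k).getLast? = some (a k)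

/-- `a` and `b` are consecutive entries of the list `l`. -/
def AdjInList (l : List V) (a b : V) : Prop :=
  ∃ l₁ l₂, l = l₁ ++ a :: b :: l₂

/-- The edge relation of (a subdigraph of `D` forming) the necklace `N`: all `D`-edges inside a
bead together with the edges of the connecting paths. -/
def Necklace.edges {D : V → V → Prop} (N : Necklace D) (a b : V) : Prop :=
  D a b ∧ ((∃ n, a ∈ N.bead n ∧ b ∈ N.bead n) ∨
    (∃ n, AdjInList (N.fwd n) a b ∨ AdjInList (N.bwd n) a b))

/-- A generalized ray: a directed ray (`true`) or a reverse directed ray (`false`). -/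
def IsGenRay (D : V → V → Prop) : Bool × (ℕ → V) → Prop
  | (true, R) => IsRay D R
  | (false, R) => IsRevRay D R

/-- Pre-end equivalence of generalized rays: infinitely many disjoint paths in both
directions. -/
def PreEquiv (D : V → V → Prop) (Q Q' : Bool × (ℕ → V)) : Prop :=
  DisjointPathsFrom D (Set.range Q.2) (Set.range Q'.2) ∧
  DisjointPathsFrom D (Set.range Q'.2) (Set.range Q.2)

/-- The pre-end `γ` includes the end represented by the solid ray `R`. -/
def IncludesEnd (D : V → V → Prop) (γ : Set (Bool × (ℕ → V))) (R : ℕ → V) : Prop :=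
  Solid D R ∧ ∀ R', Solid D R' → EndEquiv D R R' → (true, R') ∈ γ

/-- The set of edges of `D` from `A` to `B`. -/
def EdgesBetween (D : V → V → Prop) (A B : Set V) : Set (V × V) :=
  {e | D e.1 e.2 ∧ e.1 ∈ A ∧ e.2 ∈ B}

/-- A bundle of `D − X`. -/
def IsBundle (D : V → V → Prop) (X : Finset V) (E : Set (V × V)) : Prop :=
  E.Nonempty ∧
  ((∃ C C', IsSCCIn D ((↑X : Set V)ᶜ) C ∧ IsSCCIn D ((↑X : Set V)ᶜ) C' ∧ C ≠ C' ∧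
      E = EdgesBetween D C C') ∨
   (∃ v ∈ X, ∃ C, IsSCCIn D ((↑X : Set V)ᶜ) C ∧
      (E = EdgesBetween D {v} C ∨ E = EdgesBetween D C {v})))

/-- Compatibility `f(X) ⊇ f(Y)` between values of a direction (a strong component is regarded
as containing a bundle if it contains all its edges). -/
def DirCompat : Set V ⊕ Set (V × V) → Set V ⊕ Set (V × V) → Prop
  | Sum.inl C, Sum.inl C' => C' ⊆ C
  | Sum.inl C, Sum.inr E' => ∀ e ∈ E', e.1 ∈ C ∧ e.2 ∈ C
  | Sum.inr _, Sum.inl _ => False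
  | Sum.inr E, Sum.inr E' => E' ⊆ E

/-- A direction of `D`: maps each finite `X` to a strong component or a bundle of `D − X`,
compatibly. -/
def IsDirection (D : V → V → Prop) (f : Finset V → Set V ⊕ Set (V × V)) : Prop :=
  (∀ X : Finset V, (∃ C, IsSCCIn D ((↑X : Set V)ᶜ) C ∧ f X = Sum.inl C) ∨
    (∃ E, IsBundle D X E ∧ f X = Sum.inr E)) ∧
  ∀ X Y : Finset V, X ⊆ Y → DirCompat (f X) (f Y)

/-- An edge-direction: a direction whose value is a bundle for some finite `X`. -/
def IsEdgeDirection (D : V → V → Prop) (f : Finset V → Set V ⊕ Set (V × V)) : Prop :=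
  IsDirection D f ∧ ∃ (X : Finset V) (E : Set (V × V)), f X = Sum.inr E

/-- The three kinds of (potential) limit edges: end–end, vertex–end, end–vertex.
Ends are given as sets of (solid) rays. -/
inductive LimitEdgeObj (V : Type*) where
  | ee (Ω₁ Ω₂ : Set (ℕ → V))
  | ve (v : V) (Ω : Set (ℕ → V))
  | ev (Ω : Set (ℕ → V)) (v : V)

/-- `l` is a limit edge of `D`. -/
def IsLimitEdge (D : V → V → Prop) : LimitEdgeObj V → Prop
  | LimitEdgeObj.ee Ω₁ Ω₂ => IsEnd D Ω₁ ∧ IsEnd D Ω₂ ∧ Ω₁ ≠ Ω₂ ∧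
      ∀ R ∈ Ω₁, ∀ R' ∈ Ω₂, LimitEdgeEE D R R'
  | LimitEdgeObj.ve v Ω => IsEnd D Ω ∧ ∀ R ∈ Ω, LimitEdgeVE D v R
  | LimitEdgeObj.ev Ω v => IsEnd D Ω ∧ ∀ R ∈ Ω, LimitEdgeEV D R v

/-- `f` agrees with the map `f_λ` for the end–end limit edge `Ω₁Ω₂`. -/
def AgreesEE (D : V → V → Prop) (Ω₁ Ω₂ : Set (ℕ → V))
    (f : Finset V → Set V ⊕ Set (V × V)) : Prop :=
  ∀ (X : Finset V), ∀ R ∈ Ω₁, ∀ R' ∈ Ω₂, ∀ C C',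
    IsSCCIn D ((↑X : Set V)ᶜ) C → HasTailIn R C →
    IsSCCIn D ((↑X : Set V)ᶜ) C' → HasTailIn R' C' →
    (C = C' → f X = Sum.inl C) ∧ (C ≠ C' → f X = Sum.inr (EdgesBetween D C C'))

/-- `f` agrees with the map `f_λ` for the vertex–end limit edge `vΩ`. -/
def AgreesVE (D : V → V → Prop) (v : V) (Ω : Set (ℕ → V))
    (f : Finset V → Set V ⊕ Set (V × V)) : Prop :=
  ∀ (X : Finset V), ∀ R ∈ Ω, ∀ C, IsSCCIn D ((↑X : Set V)ᶜ) C → HasTailIn R C →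
    (v ∈ C → f X = Sum.inl C) ∧
    (v ∈ (↑X : Set V) → f X = Sum.inr (EdgesBetween D {v} C)) ∧
    (∀ C', IsSCCIn D ((↑X : Set V)ᶜ) C' → v ∈ C' → C' ≠ C →
      f X = Sum.inr (EdgesBetween D C' C))

/-- `f` agrees with the map `f_λ` for the end–vertex limit edge `Ωv`. -/
def AgreesEV (D : V → V → Prop) (Ω : Set (ℕ → V)) (v : V)
    (f : Finset V → Set V ⊕ Set (V × V)) : Prop :=
  ∀ (X : Finset V), ∀ R ∈ Ω, ∀ C, IsSCCIn D ((↑X : Set V)ᶜ) C → HasTailIn R C →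
    (v ∈ C → f X = Sum.inl C) ∧
    (v ∈ (↑X : Set V) → f X = Sum.inr (EdgesBetween D C {v})) ∧
    (∀ C', IsSCCIn D ((↑X : Set V)ᶜ) C' → v ∈ C' → C' ≠ C →
      f X = Sum.inr (EdgesBetween D C C'))

/-- `f` agrees with `f_λ` for the limit edge `l`. -/
def Agrees (D : V → V → Prop) : LimitEdgeObj V → (Finset V → Set V ⊕ Set (V × V)) → Prop
  | LimitEdgeObj.ee Ω₁ Ω₂, f => AgreesEE D Ω₁ Ω₂ f
  | LimitEdgeObj.ve v Ω, f => AgreesVE D v Ω f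
  | LimitEdgeObj.ev Ω v, f => AgreesEV D Ω v f

/-! Let `X₀` separate `ω` from `η`. For any finite `X`, the rays `R₁` and `R₂` have tails in
distinct strong components of `D − (X ∪ X₀)`, and the limit edge provides an edge from the first
to the second; so `R₁` reaches `R₂` in `D − X`, and a shortest such walk is an `R₁`–`R₂` path
avoiding `X`. Choosing each path to avoid all previously chosen ones gives infinitely many
disjoint paths. -/

namespace List

variable {α : Type*} {r : α → α → Prop} {l : List α} {x : α}

theorem IsChain.exists_shorter_of_not_nodup (hl : l.IsChain r) (hnd : ¬ l.Nodup) :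
    ∃ l', l'.length < l.length ∧ l'.IsChain r ∧ l'.head? = l.head? ∧
      l'.getLast? = l.getLast? ∧ l' ⊆ l := by
  obtain ⟨x, hx⟩ := exists_duplicate_iff_not_nodup.2 hnd
  obtain ⟨r₁, r₂, rfl, hx₁, hx₂⟩ := cons_sublist_iff.1 (duplicate_iff_sublist.1 hx)
  obtain ⟨s₁, s₂, rfl⟩ := append_of_mem hx₁
  obtain ⟨s₃, s₄, rfl⟩ := append_of_mem (singleton_sublist.1 hx₂)
  refine ⟨s₁ ++ x :: s₄, by simp only [length_append, length_cons]; omega, ?_, by simp,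
    by simp only [← append_assoc, getLast?_append_cons],
    fun y => by simp only [mem_append, mem_cons]; tauto⟩
  have hpre : (s₁ ++ [x]).IsChain r := hl.prefix ⟨s₂ ++ s₃ ++ x :: s₄, by simp⟩
  have hsuf : ([x] ++ s₄).IsChain r := hl.suffix ⟨s₁ ++ x :: s₂ ++ s₃, by simp⟩
  simpa using hpre.append_overlap hsuf (cons_ne_nil x [])

theorem exists_suffix_head?_eq_of_mem_tail (hx : x ∈ l.tail) :
    ∃ l', l' <:+ l ∧ l'.length < l.length ∧ l'.head? = some x ∧ l'.getLast? = l.getLast? := by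
  obtain ⟨a, t, rfl⟩ := exists_cons_of_ne_nil (ne_nil_of_mem (mem_of_mem_tail hx))
  obtain ⟨t₁, t₂, rfl⟩ := append_of_mem hx
  exact ⟨x :: t₂, ⟨a :: t₁, rfl⟩, by simp, rfl, (getLast?_append_cons (a :: t₁) x t₂).symm⟩

theorem exists_prefix_getLast?_eq_of_mem_dropLast (hx : x ∈ l.dropLast) :
    ∃ l', l' <+: l ∧ l'.length < l.length ∧ l'.getLast? = some x ∧ l'.head? = l.head? := by
  have hl := (dropLast_append_getLast (ne_nil_of_mem (mem_of_mem_dropLast hx))).symm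
  generalize l.getLast _ = b at hl
  obtain ⟨d₁, d₂, hd⟩ := append_of_mem hx
  rw [hd] at hl
  subst hl
  exact ⟨d₁ ++ [x], ⟨d₂ ++ [b], by simp⟩, by simp, by simp, by simp⟩

end List

section Paths

variable {D : V → V → Prop}

def IsPathFrom (D : V → V → Prop) (A B : Set V) (l : List V) : Prop :=
  IsPathList D l ∧ (∃ a, l.head? = some a ∧ a ∈ A) ∧ (∃ b, l.getLast? = some b ∧ b ∈ B) ∧
    (∀ x ∈ l.tail, x ∉ A) ∧ (∀ x ∈ l.dropLast, x ∉ B)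

theorem exists_isPathFrom_of_isChain {A B : Set V} {l : List V} (hl : l.IsChain D)
    (hA : ∃ a, l.head? = some a ∧ a ∈ A) (hB : ∃ b, l.getLast? = some b ∧ b ∈ B) :
    ∃ q, IsPathFrom D A B q ∧ q ⊆ l := by
  induction hn : l.length using Nat.strong_induction_on generalizing l with
  | _ n ih =>
  by_cases hshort : ∃ l', l'.length < l.length ∧ l'.IsChain D ∧
      (∃ a, l'.head? = some a ∧ a ∈ A) ∧ (∃ b, l'.getLast? = some b ∧ b ∈ B) ∧ l' ⊆ l
  · obtain ⟨l', hlen, hl', hA', hB', hsub⟩ := hshort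
    obtain ⟨q, hq, hql'⟩ := ih _ (hn ▸ hlen) hl' hA' hB' rfl
    exact ⟨q, hq, List.Subset.trans hql' hsub⟩
  refine ⟨l, ⟨⟨?_, ?_, hl⟩, hA, hB, ?_, ?_⟩, List.Subset.refl l⟩
  · rintro rfl
    simp at hA
  · by_contra hnd
    obtain ⟨l', hlen, hl', hhead, hlast, hsub⟩ := hl.exists_shorter_of_not_nodup hnd
    exact hshort ⟨l', hlen, hl', hhead ▸ hA, hlast ▸ hB, hsub⟩
  · intro x hx hxA
    obtain ⟨l', hsuf, hlen, hhead, hlast⟩ := List.exists_suffix_head?_eq_of_mem_tail hx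
    exact hshort ⟨l', hlen, hl.suffix hsuf, ⟨x, hhead, hxA⟩, hlast ▸ hB, hsuf.subset⟩
  · intro x hx hxB
    obtain ⟨l', hpre, hlen, hlast, hhead⟩ := List.exists_prefix_getLast?_eq_of_mem_dropLast hx
    exact hshort ⟨l', hlen, hl.prefix hpre, hhead ▸ hA, ⟨x, hlast, hxB⟩, hpre.subset⟩

theorem ReachIn.mono {S T : Set V} (hST : S ⊆ T) {a b : V} (h : ReachIn D S a b) :
    ReachIn D T a b :=
  ⟨hST h.1, hST h.2.1, Relation.ReflTransGen.mono (fun _ _ hxy => ⟨hST hxy.1, hxy.2⟩) _ _ h.2.2⟩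

theorem ReachIn.trans {S : Set V} {a b c : V} (hab : ReachIn D S a b) (hbc : ReachIn D S b c) :
    ReachIn D S a c :=
  ⟨hab.1, hbc.2.1, hab.2.2.trans hbc.2.2⟩

theorem ReachIn.single {S : Set V} {a b : V} (ha : a ∈ S) (hb : b ∈ S) (hab : D a b) :
    ReachIn D S a b :=
  ⟨ha, hb, .single ⟨hb, hab⟩⟩

theorem ReachIn.exists_isChain {S : Set V} {a b : V} (h : ReachIn D S a b) :
    ∃ l : List V, l.IsChain D ∧ l.head? = some a ∧ l.getLast? = some b ∧ ∀ x ∈ l, x ∈ S := by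
  obtain ⟨l, hl, hlast⟩ := List.exists_isChain_cons_of_relationReflTransGen h.2.2
  refine ⟨a :: l, hl.imp fun _ _ hxy => hxy.2, rfl, ?_, ?_⟩
  · rw [List.getLast?_eq_some_getLast (List.cons_ne_nil a l), hlast]
  · exact hl.induction (· ∈ S) _ (fun _ _ hxy _ => hxy.1) fun _ => h.1

theorem ReachIn.exists_isPathFrom {S A B : Set V} {a b : V} (h : ReachIn D S a b) (ha : a ∈ A)
    (hb : b ∈ B) : ∃ q, IsPathFrom D A B q ∧ ∀ x ∈ q, x ∈ S := by
  obtain ⟨l, hl, hhead, hlast, hS⟩ := h.exists_isChain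
  obtain ⟨q, hq, hql⟩ := exists_isPathFrom_of_isChain hl ⟨a, hhead, ha⟩ ⟨b, hlast, hb⟩
  exact ⟨q, hq, fun x hx => hS x (hql hx)⟩

theorem IsSCCIn.subset {S C : Set V} (hC : IsSCCIn D S C) : C ⊆ S := by
  obtain ⟨a, -, rfl⟩ := hC
  exact fun _ hb => hb.1.2.1

theorem IsSCCIn.reachIn {S C : Set V} (hC : IsSCCIn D S C) {u w : V} (hu : u ∈ C) (hw : w ∈ C) :
    ReachIn D S u w := by
  obtain ⟨a, -, rfl⟩ := hC
  exact hu.2.trans hw.1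

theorem IsSCCIn.exists_superset {S T C : Set V} (hST : S ⊆ T) (hC : IsSCCIn D S C) :
    ∃ C', IsSCCIn D T C' ∧ C ⊆ C' := by
  obtain ⟨a, ha, rfl⟩ := hC
  exact ⟨_, ⟨a, hST ha, rfl⟩, fun _ hb => ⟨hb.1.mono hST, hb.2.mono hST⟩⟩

theorem HasTailIn.mono {R : ℕ → V} {C C' : Set V} (hCC' : C ⊆ C') (h : HasTailIn R C) :
    HasTailIn R C' :=
  let ⟨n, hn⟩ := h
  ⟨n, fun m hm => hCC' (hn m hm)⟩

theorem IsSCCIn.ne_of_separates {R R' : ℕ → V} {X Y : Finset V} {C C' : Set V} (hXY : X ⊆ Y)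
    (hsep : ∀ C, IsSCCIn D ((↑X : Set V)ᶜ) C → HasTailIn R C → ¬ HasTailIn R' C)
    (hC : IsSCCIn D ((↑Y : Set V)ᶜ) C) (hR : HasTailIn R C) (hR' : HasTailIn R' C') :
    C ≠ C' := by
  rintro rfl
  obtain ⟨C₀, hC₀, hCC₀⟩ := hC.exists_superset (Set.compl_subset_compl.2 (Finset.coe_subset.2 hXY))
  exact hsep C₀ hC₀ (hR.mono hCC₀) (hR'.mono hCC₀)

theorem exists_reachIn_of_limitEdgeEE {Rω Rη R₁ R₂ : ℕ → V} (hne : ¬ EndEquiv D Rω Rη)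
    (hl : LimitEdgeEE D Rω Rη) (h₁ : EndEquiv D Rω R₁) (h₂ : EndEquiv D Rη R₂) (X : Finset V) :
    ∃ m n, ReachIn D ((↑X : Set V)ᶜ) (R₁ m) (R₂ n) := by
  classical
  obtain ⟨X₀, hX₀⟩ : ∃ X₀ : Finset V,
      ∀ C, IsSCCIn D ((↑X₀ : Set V)ᶜ) C → HasTailIn Rω C → ¬ HasTailIn Rη C := by
    simpa [EndEquiv] using hne
  obtain ⟨C₁, hC₁, hω, ⟨m, hm⟩⟩ := h₁ (X ∪ X₀)
  obtain ⟨C₂, hC₂, hη, ⟨n, hn⟩⟩ := h₂ (X ∪ X₀)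
  obtain ⟨a, ha, b, hb, hab⟩ :=
    hl _ C₁ C₂ hC₁ hω hC₂ hη (hC₁.ne_of_separates Finset.subset_union_right hX₀ hω hη)
  have hreach : ReachIn D ((↑(X ∪ X₀) : Set V)ᶜ) (R₁ m) (R₂ n) :=
    ((hC₁.reachIn (hm m le_rfl) ha).trans
      (.single (hC₁.subset ha) (hC₂.subset hb) hab)).trans
      (hC₂.reachIn hb (hn n le_rfl))
  exact ⟨m, n, hreach.mono (Set.compl_subset_compl.2 (by simp))⟩

theorem disjointPathsFrom_of_forall_avoiding {A B : Set V}
    (h : ∀ X : Finset V, ∃ l, IsPathFrom D A B l ∧ ∀ x ∈ l, x ∉ X) : DisjointPathsFrom D A B := by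
  classical
  choose P hP hPX using h
  let used : ℕ → Finset V := fun k => Nat.rec ∅ (fun _ U => U ∪ (P U).toFinset) k
  have hmono : Monotone used := monotone_nat_of_le_succ fun _ => Finset.subset_union_left
  have hdisj : ∀ j k, j < k → ∀ x ∈ P (used j), x ∉ P (used k) := fun j k hjk x hxj hxk =>
    hPX (used k) x hxk (hmono hjk (Finset.mem_union_right _ (List.mem_toFinset.2 hxj)))
  refine ⟨fun k => P (used k), fun k => (hP _).1, ?_, fun k => (hP _).2.1, fun k => (hP _).2.2.1,
    fun k => (hP _).2.2.2.1, fun k => (hP _).2.2.2.2⟩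
  intro j k hjk x hxj hxk
  rcases hjk.lt_or_gt with hlt | hlt
  · exact hdisj j k hlt x hxj hxk
  · exact hdisj k j hlt x hxk hxj

end Paths

theorem limit_edge_implies_le_general (D : V → V → Prop) (Rω Rη : ℕ → V)
    (hne : ¬ EndEquiv D Rω Rη)
    (hl : LimitEdgeEE D Rω Rη) :
    ∀ R₁ R₂, Solid D R₁ → EndEquiv D Rω R₁ → Solid D R₂ → EndEquiv D Rη R₂ →
      DisjointPathsFrom D (Set.range R₁) (Set.range R₂) := by
  intro R₁ R₂ _ h₁ _ h₂
  refine disjointPathsFrom_of_forall_avoiding fun X => ?_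
  obtain ⟨m, n, hreach⟩ := exists_reachIn_of_limitEdgeEE hne hl h₁ h₂ X
  exact hreach.exists_isPathFrom ⟨m, rfl⟩ ⟨n, rfl⟩

/-- A limit edge from `ω` to `η` implies `ω ≤ η`: infinitely many disjoint paths from any ray
representing `ω` to any ray representing `η`. -/
theorem limit_edge_implies_le (D : V → V → Prop) (Rω Rη : ℕ → V)
    (hω : Solid D Rω) (hη : Solid D Rη) (hne : ¬ EndEquiv D Rω Rη)
    (hl : LimitEdgeEE D Rω Rη) :
    ∀ R₁ R₂, Solid D R₁ → EndEquiv D Rω R₁ → Solid D R₂ → EndEquiv D Rη R₂ →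
      DisjointPathsFrom D (Set.range R₁) (Set.range R₂) :=
  limit_edge_implies_le_general D Rω Rη hne hl
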